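/- arXiv:2108.07213 — 2 statements merged into one kernel-verified Lean document; each statement's English description precedes it below -/
import Mathlib

section
/- A reversion determines its center: Let P, Q ∈ ℝ³ with ⟨P,P⟩ ≠ 0 and ⟨Q,Q⟩ ≠ 0. If M_Q ∘ M_P = c · id for some c ∈ ℝ (equivalently, if M_Q is a scalar multiple of M_P), then Q and P are linearly dependent, i.e., Q represents the same projective point as P. Consequently, if points P₁,…,P_{n−2} off C have the closing property with respect to C, then P₁,…,P_{n−2}, P_{n−1}, P_n (with P_{n−1}, P_n off C) have the closing property if and only if P_{n−1} and P_n are linearly dependent. -/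
/-!
`M_P` is `⟨P,P⟩` times the Minkowski reflection in `P`: it acts as `⟨P,P⟩` on `P^⊥` and as
`-⟨P,P⟩` on `P`. If `P, Q` were independent, a nonzero `X ⊥ P, Q` (a twisted cross product)
would give `M_Q M_P X = ⟨P,P⟩⟨Q,Q⟩ X`, while `M_Q M_P P = -⟨P,P⟩(⟨Q,Q⟩P - 2⟨P,Q⟩Q)`; so a
scalar `M_Q M_P` forces `⟨P,P⟩⟨Q,Q⟩ = 0`. Conversely `M_{aQ} = a² M_Q` and
`M_Q² = ⟨Q,Q⟩² id`. In a chain, a closed prefix only contributes a nonzero scalar, so closing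
after two more points depends on those two points alone.
-/

/-- Minkowski product on ℝ³. -/
def mink (X Y : Fin 3 → ℝ) : ℝ := X 0 * Y 0 + X 1 * Y 1 - X 2 * Y 2

/-- The reversion map in the point `P` (with `⟨P,P⟩ ≠ 0`), as a linear map on
representing vectors: `M_P X = ⟨P,P⟩X − 2⟨X,P⟩P`. -/
def rev (P X : Fin 3 → ℝ) : Fin 3 → ℝ := mink P P • X - (2 * mink X P) • P

/-- `chain n P X = (M_{P n} ∘ ⋯ ∘ M_{P 1}) X`, the composition of the reversions in
`P 0, …, P (n-1)`, applied in this order. -/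
def chain : (n : ℕ) → (Fin n → (Fin 3 → ℝ)) → (Fin 3 → ℝ) → (Fin 3 → ℝ)
  | 0, _, X => X
  | n + 1, P, X => rev (P (Fin.last n)) (chain n (fun i => P i.castSucc) X)

/-- The points `P 0, …, P (n-1)`, have the closing property with respect to the conic
`C` iff `M_{P n} ∘ ⋯ ∘ M_{P 1}` is a nonzero scalar multiple of the identity. -/
def closes (n : ℕ) (P : Fin n → (Fin 3 → ℝ)) : Prop :=
  ∃ c : ℝ, c ≠ 0 ∧ ∀ X, chain n P X = c • X

open Matrix

lemma ne_zero_of_mink_self_ne_zero {P : Fin 3 → ℝ} (hP : mink P P ≠ 0) : P ≠ 0 := by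
  rintro rfl
  simp [mink] at hP

lemma rev_self (P : Fin 3 → ℝ) : rev P P = -mink P P • P := by
  ext j; simp only [rev, mink, Pi.sub_apply, Pi.smul_apply, smul_eq_mul]; ring

lemma rev_of_mink_eq_zero {P X : Fin 3 → ℝ} (h : mink X P = 0) : rev P X = mink P P • X := by
  simp [rev, h]

lemma rev_smul (P X : Fin 3 → ℝ) (s : ℝ) : rev P (s • X) = s • rev P X := by
  ext j; simp only [rev, mink, Pi.sub_apply, Pi.smul_apply, smul_eq_mul]; ring

lemma rev_smul_center (Q X : Fin 3 → ℝ) (a : ℝ) : rev (a • Q) X = a ^ 2 • rev Q X := by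
  ext j; simp only [rev, mink, Pi.sub_apply, Pi.smul_apply, smul_eq_mul]; ring

lemma rev_rev_self (Q X : Fin 3 → ℝ) : rev Q (rev Q X) = mink Q Q ^ 2 • X := by
  ext j; simp only [rev, mink, Pi.sub_apply, Pi.smul_apply, smul_eq_mul]; ring

def minkCross (P Q : Fin 3 → ℝ) : Fin 3 → ℝ := ![(P ⨯₃ Q) 0, (P ⨯₃ Q) 1, -(P ⨯₃ Q) 2]

lemma mink_minkCross_left (P Q : Fin 3 → ℝ) : mink (minkCross P Q) P = 0 := by
  simp [minkCross, mink, cross_apply]; ring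

lemma mink_minkCross_right (P Q : Fin 3 → ℝ) : mink (minkCross P Q) Q = 0 := by
  simp [minkCross, mink, cross_apply]; ring

lemma minkCross_ne_zero {P Q : Fin 3 → ℝ} (h : LinearIndependent ℝ ![P, Q]) :
    minkCross P Q ≠ 0 := by
  intro h0
  refine crossProduct_ne_zero_iff_linearIndependent.mpr h (funext fun j => ?_)
  have hj := congrFun h0 j
  fin_cases j <;> simpa [minkCross] using hj

theorem not_linearIndependent_of_rev_rev_eq_smul {P Q : Fin 3 → ℝ} (hP : mink P P ≠ 0)
    (hQ : mink Q Q ≠ 0) {c : ℝ} (h : ∀ X, rev Q (rev P X) = c • X) :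
    ¬ LinearIndependent ℝ ![P, Q] := by
  intro hPQ
  set X := minkCross P Q
  have hc : c = mink P P * mink Q Q := by
    refine smul_left_injective ℝ (minkCross_ne_zero hPQ) ?_
    calc c • X = rev Q (rev P X) := (h X).symm
      _ = (mink P P * mink Q Q) • X := by
        rw [rev_of_mink_eq_zero (mink_minkCross_left P Q), rev_smul,
          rev_of_mink_eq_zero (mink_minkCross_right P Q), smul_smul]
  have hrel : (-2 * mink P P * mink Q Q) • P + (2 * mink P P * mink P Q) • Q = 0 := by
    have hPP := h P
    rw [rev_self, rev_smul, hc] at hPP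
    ext j
    have hj := congrFun hPP j
    simp only [rev, Pi.sub_apply, Pi.smul_apply, smul_eq_mul] at hj
    simp only [Pi.add_apply, Pi.smul_apply, smul_eq_mul, Pi.zero_apply]
    linear_combination hj
  have hcoeff := (LinearIndependent.pair_iff.mp hPQ _ _ hrel).1
  exact mul_ne_zero (mul_ne_zero (by norm_num) hP) hQ hcoeff

lemma chain_snoc {n : ℕ} (P : Fin n → Fin 3 → ℝ) (Q X : Fin 3 → ℝ) :
    chain (n + 1) (Fin.snoc P Q) X = rev Q (chain n P X) := by
  simp [chain]

lemma closes_snoc_snoc_iff {m : ℕ} {P : Fin m → Fin 3 → ℝ} (hP : closes m P) (Q Q' : Fin 3 → ℝ) :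
    closes (m + 2) (Fin.snoc (Fin.snoc P Q) Q') ↔ closes 2 ![Q, Q'] := by
  obtain ⟨c, hc0, hc⟩ := hP
  have hchain : ∀ X, chain (m + 2) (Fin.snoc (Fin.snoc P Q) Q') X = c • chain 2 ![Q, Q'] X := by
    intro X
    rw [chain_snoc, chain_snoc, hc, rev_smul, rev_smul]
    rfl
  constructor
  · rintro ⟨d, hd0, hd⟩
    refine ⟨d / c, div_ne_zero hd0 hc0, fun X => smul_right_injective _ hc0 ?_⟩
    simp only [← hchain, hd, smul_smul, mul_div_cancel₀ _ hc0]
  · rintro ⟨d, hd0, hd⟩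
    exact ⟨c * d, mul_ne_zero hc0 hd0, fun X => by rw [hchain, hd, smul_smul]⟩

lemma closes_two_iff {Q Q' : Fin 3 → ℝ} (hQ : mink Q Q ≠ 0) (hQ' : mink Q' Q' ≠ 0) :
    closes 2 ![Q, Q'] ↔ ¬ LinearIndependent ℝ ![Q, Q'] := by
  constructor
  · rintro ⟨d, -, hd⟩
    exact not_linearIndependent_of_rev_rev_eq_smul hQ hQ' hd
  · intro hdep
    obtain ⟨a, rfl⟩ : ∃ a : ℝ, a • Q = Q' := by
      simpa [LinearIndependent.pair_iff' (ne_zero_of_mink_self_ne_zero hQ)] using hdep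
    have ha : a ≠ 0 := by
      rintro rfl
      exact ne_zero_of_mink_self_ne_zero hQ' (zero_smul ℝ Q)
    refine ⟨a ^ 2 * mink Q Q ^ 2, by positivity, fun X => ?_⟩
    change rev (a • Q) (rev Q X) = _
    rw [rev_smul_center, rev_rev_self, smul_smul]

/-- **A reversion determines its center.** If `M_Q ∘ M_P` is a scalar multiple of the
identity for `P, Q` off the conic `C`, then `P` and `Q` are linearly dependent, i.e.
they represent the same projective point. Consequently, if `P 0, …, P (m-1)` off `C`
have the closing property, then appending two further points `Q, Q'` off `C` yields the
closing property if and only if `Q` and `Q'` are linearly dependent. -/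
theorem reversion_determines_center :
    (∀ P Q : Fin 3 → ℝ, mink P P ≠ 0 → mink Q Q ≠ 0 →
      (∃ c : ℝ, ∀ X, rev Q (rev P X) = c • X) → ¬ LinearIndependent ℝ ![P, Q]) ∧
    (∀ (m : ℕ) (P : Fin m → (Fin 3 → ℝ)), (∀ i, mink (P i) (P i) ≠ 0) → closes m P →
      ∀ Q Q' : Fin 3 → ℝ, mink Q Q ≠ 0 → mink Q' Q' ≠ 0 →
        (closes (m + 2) (Fin.snoc (Fin.snoc P Q) Q') ↔
          ¬ LinearIndependent ℝ ![Q, Q'])) :=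
  ⟨fun _ _ hP hQ ⟨_, h⟩ => not_linearIndependent_of_rev_rev_eq_smul hP hQ h,
    fun _ _ _ hP _ _ hQ hQ' => (closes_snoc_snoc_iff hP _ _).trans (closes_two_iff hQ hQ')⟩
end

section
/- Three inscribed polygons force closing: Let P₁,…,P_n ∈ ℝ³ with ⟨Pᵢ,Pᵢ⟩ ≠ 0, and set M := M_{P_n} ∘ ⋯ ∘ M_{P₁}. If there exist three pairwise non-parallel nonzero vectors A¹, A², A³ on the conic C (⟨Aʲ,Aʲ⟩ = 0) such that M Aʲ is a nonzero scalar multiple of Aʲ for j = 1, 2, 3 (i.e., three different n-gons inscribed in C close up through P₁,…,P_n), then M is a nonzero scalar multiple of the identity, i.e., P₁,…,P_n have the closing property with respect to C. -/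
open LinearMap (BilinForm)

namespace LinearMap.BilinForm

variable {K V : Type*} [Field K] [AddCommGroup V] [Module K V] {B : BilinForm K V}

theorem eigenvalue_mul_eigenvalue_eq_of_apply_map_map {f : Module.End K V} {μ c d : K} {a b : V}
    (hf : ∀ x y, B (f x) (f y) = μ * B x y) (ha : f a = c • a) (hb : f b = d • b)
    (hab : B a b ≠ 0) : c * d = μ := by
  have h := hf a b
  rw [ha, hb, map_smul₂, map_smul, smul_eq_mul, smul_eq_mul, ← mul_assoc] at h
  exact mul_right_cancel₀ hab h

theorem linearIndependent_of_isotropic_of_apply_ne_zero [NeZero (2 : K)] (hB : B.IsSymm)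
    {v : Fin 3 → V} (hiso : ∀ i, B (v i) (v i) = 0) (hne : ∀ i j, i ≠ j → B (v i) (v j) ≠ 0) :
    LinearIndependent K v := by
  rw [Fintype.linearIndependent_iff]
  intro g hg
  have hrow (j : Fin 3) : ∑ i, g i * B (v i) (v j) = 0 := by
    simpa using congrArg (B · (v j)) hg
  have e0 := hrow 0
  have e1 := hrow 1
  have e2 := hrow 2
  simp only [Fin.sum_univ_three, hiso, mul_zero, zero_add, add_zero] at e0 e1 e2
  rw [hB.eq (v 1) (v 0), hB.eq (v 2) (v 0)] at e0
  rw [hB.eq (v 2) (v 1)] at e1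
  set b₀₁ := B (v 0) (v 1)
  set b₀₂ := B (v 0) (v 2)
  set b₁₂ := B (v 1) (v 2)
  have h₀₁ : b₀₁ ≠ 0 := hne 0 1 (by decide)
  have h₀₂ : b₀₂ ≠ 0 := hne 0 2 (by decide)
  have h₁₂ : b₁₂ ≠ 0 := hne 1 2 (by decide)
  -- the Gram matrix of `v` has determinant `2 b₀₁ b₀₂ b₁₂ ≠ 0`
  have g0 : g 0 * (2 * b₀₁ * b₀₂) = 0 := by linear_combination b₀₁ * e2 + b₀₂ * e1 - b₁₂ * e0
  have g1 : g 1 * (2 * b₀₁ * b₁₂) = 0 := by linear_combination b₀₁ * e2 + b₁₂ * e0 - b₀₂ * e1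
  have g2 : g 2 * (2 * b₀₂ * b₁₂) = 0 := by linear_combination b₀₂ * e1 + b₁₂ * e0 - b₀₁ * e2
  simp only [mul_eq_zero, two_ne_zero, h₀₁, h₀₂, h₁₂, or_false] at g0 g1 g2
  intro i
  fin_cases i <;> assumption

end LinearMap.BilinForm

def minkForm : BilinForm ℝ (Fin 3 → ℝ) :=
  LinearMap.mk₂ ℝ mink
    (fun X X' Y => by simp only [mink, Pi.add_apply]; ring)
    (fun a X Y => by simp only [mink, Pi.smul_apply, smul_eq_mul]; ring)
    (fun X Y Y' => by simp only [mink, Pi.add_apply]; ring)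
    (fun a X Y => by simp only [mink, Pi.smul_apply, smul_eq_mul]; ring)

@[simp]
theorem minkForm_apply (X Y : Fin 3 → ℝ) : minkForm X Y = mink X Y := rfl

theorem minkForm_isSymm : minkForm.IsSymm :=
  ⟨fun X Y => by simp only [minkForm_apply, mink]; ring⟩

theorem eq_zero_of_mink_self_eq_zero {X : Fin 3 → ℝ} (hX : mink X X = 0) (h2 : X 2 = 0) :
    X = 0 := by
  simp only [mink, h2, mul_zero, sub_zero] at hX
  have h0 : X 0 = 0 := by nlinarith
  have h1 : X 1 = 0 := by nlinarith
  ext i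
  fin_cases i <;> assumption

theorem mink_ne_zero_of_linearIndependent {X Y : Fin 3 → ℝ} (hX : mink X X = 0)
    (hY : mink Y Y = 0) (hXY : LinearIndependent ℝ ![X, Y]) : mink X Y ≠ 0 := by
  intro h
  have hX2 : X 2 ≠ 0 := fun h2 => hXY.ne_zero 0 (eq_zero_of_mink_self_eq_zero hX h2)
  -- `X₂ Y - Y₂ X` is null and has vanishing last coordinate
  have hZ : -Y 2 • X + X 2 • Y = 0 := by
    refine eq_zero_of_mink_self_eq_zero ?_
      (by simp only [Pi.add_apply, Pi.smul_apply, smul_eq_mul]; ring)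
    simp only [mink, Pi.add_apply, Pi.smul_apply, smul_eq_mul] at hX hY h ⊢
    linear_combination Y 2 ^ 2 * hX + X 2 ^ 2 * hY - 2 * X 2 * Y 2 * h
  exact hX2 (LinearIndependent.pair_iff.mp hXY _ _ hZ).2

def reversion (P : Fin 3 → ℝ) : Module.End ℝ (Fin 3 → ℝ) where
  toFun := rev P
  map_add' X Y := by
    ext i
    simp only [rev, mink, Pi.add_apply, Pi.sub_apply, Pi.smul_apply, smul_eq_mul]
    ring
  map_smul' a X := by
    ext i
    simp only [rev, mink, Pi.sub_apply, Pi.smul_apply, smul_eq_mul, RingHom.id_apply]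
    ring

@[simp]
theorem reversion_apply (P X : Fin 3 → ℝ) : reversion P X = rev P X := rfl

theorem mink_rev_rev (P X Y : Fin 3 → ℝ) :
    mink (rev P X) (rev P Y) = mink P P ^ 2 * mink X Y := by
  simp only [rev, mink, Pi.sub_apply, Pi.smul_apply, smul_eq_mul]
  ring

def chainEnd : (n : ℕ) → (Fin n → Fin 3 → ℝ) → Module.End ℝ (Fin 3 → ℝ)
  | 0, _ => 1
  | n + 1, P => reversion (P (Fin.last n)) * chainEnd n (fun i => P i.castSucc)

@[simp]
theorem chainEnd_apply (n : ℕ) (P : Fin n → Fin 3 → ℝ) (X : Fin 3 → ℝ) :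
    chainEnd n P X = chain n P X := by
  induction n with
  | zero => rfl
  | succ m ih => simp [chainEnd, chain, ih]

theorem mink_chain_chain (n : ℕ) (P : Fin n → Fin 3 → ℝ) (X Y : Fin 3 → ℝ) :
    mink (chain n P X) (chain n P Y) = (∏ i, mink (P i) (P i)) ^ 2 * mink X Y := by
  induction n with
  | zero => simp [chain]
  | succ m ih => rw [chain, chain, mink_rev_rev, ih, Fin.prod_univ_castSucc]; ring

theorem three_inscribed_polygons_force_closing_general
    (n : ℕ) (P : Fin n → (Fin 3 → ℝ))
    (A : Fin 3 → (Fin 3 → ℝ))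
    (hAC : ∀ j, mink (A j) (A j) = 0)
    (hApar : ∀ j k, j ≠ k → LinearIndependent ℝ ![A j, A k])
    (hfix : ∀ j, ∃ c : ℝ, c ≠ 0 ∧ chain n P (A j) = c • A j) :
    closes n P := by
  choose c hc hcA using hfix
  have horth : ∀ j k, j ≠ k → minkForm (A j) (A k) ≠ 0 := fun j k hjk =>
    mink_ne_zero_of_linearIndependent (hAC j) (hAC k) (hApar j k hjk)
  have hprod : ∀ j k, j ≠ k → c j * c k = (∏ i, mink (P i) (P i)) ^ 2 := fun j k hjk =>
    LinearMap.BilinForm.eigenvalue_mul_eigenvalue_eq_of_apply_map_map (f := chainEnd n P)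
      (by simp [mink_chain_chain]) (by simp [hcA]) (by simp [hcA]) (horth j k hjk)
  have hc0 : ∀ j, c j = c 0 := by
    have h1 : c 1 = c 0 :=
      mul_right_cancel₀ (hc 2) ((hprod 1 2 (by decide)).trans (hprod 0 2 (by decide)).symm)
    have h2 : c 2 = c 0 :=
      mul_right_cancel₀ (hc 1) ((hprod 2 1 (by decide)).trans (hprod 0 1 (by decide)).symm)
    intro j
    fin_cases j <;> simp [h1, h2]
  have hA : LinearIndependent ℝ A :=
    LinearMap.BilinForm.linearIndependent_of_isotropic_of_apply_ne_zero minkForm_isSymm hAC horth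
  let b := basisOfLinearIndependentOfCardEqFinrank hA (by simp)
  have hM : chainEnd n P = c 0 • 1 := b.ext fun j => by simp [b, hcA, hc0]
  exact ⟨c 0, hc 0, fun X => by simpa using LinearMap.congr_fun hM X⟩

/-- **Three inscribed polygons force closing.** If the composition
`M = M_{P n} ∘ ⋯ ∘ M_{P 1}` of reversions in points off the conic `C` fixes three
pairwise non-parallel points of `C` projectively (three different inscribed `n`-gons
close up), then `M` is a nonzero scalar multiple of the identity, i.e. the points
`P 0, …, P (n-1)` have the closing property with respect to `C`. -/
theorem three_inscribed_polygons_force_closing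
    (n : ℕ) (P : Fin n → (Fin 3 → ℝ)) (hP : ∀ i, mink (P i) (P i) ≠ 0)
    (A : Fin 3 → (Fin 3 → ℝ))
    (hA0 : ∀ j, A j ≠ 0)
    (hAC : ∀ j, mink (A j) (A j) = 0)
    (hApar : ∀ j k, j ≠ k → LinearIndependent ℝ ![A j, A k])
    (hfix : ∀ j, ∃ c : ℝ, c ≠ 0 ∧ chain n P (A j) = c • A j) :
    closes n P :=
  three_inscribed_polygons_force_closing_general n P A hAC hApar hfix
end
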